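/- Let S be a closed linear subspace of a finite-dimensional real inner product space with orthogonal projection P, let β₀, β₁, …, β_L ∈ [0,1] be a noise schedule with β₀ = 0, let f₁, …, f_L be arbitrary functions on the space, and let ε₁, …, ε_L be arbitrary vectors. Define the reverse recursion τ_{i−1} = (√(1−β_{i−1}) P + √β_{i−1} · id)(f_i(τ_i) + √β_i ε_i) for i = L, …, 1, starting from any τ_L. Then the final output τ₀ lies in S, i.e., the generated trajectory is dynamically admissible regardless of the denoising functions f_i and the noise realizations ε_i. -/

import Mathlib

/-- for a subspace `S` of a finite-dimensional real inner product
space with orthogonal projection `P`, a noise schedule `β₀,…,β_L ∈ [0,1]` with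
`β₀ = 0`, arbitrary denoising functions `f_i` and noise vectors `ε_i`, the reverse
recursion `τ_{i−1} = (√(1−β_{i−1}) P + √β_{i−1} id)(f_i(τ_i) + √β_i ε_i)` produces
a final output `τ₀` lying in `S`. -/
theorem denoised_trajectory_mem_admissible_subspace
    {H : Type*} [NormedAddCommGroup H] [InnerProductSpace ℝ H]
    [FiniteDimensional ℝ H]
    (S : Submodule ℝ H) (L : ℕ) (hL : 1 ≤ L)
    (β : ℕ → ℝ) (hβ : ∀ i ≤ L, β i ∈ Set.Icc (0 : ℝ) 1) (hβ0 : β 0 = 0)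
    (f : ℕ → H → H) (ε : ℕ → H) (τ : ℕ → H)
    (hrec : ∀ i < L,
      τ i = Real.sqrt (1 - β i) •
          ((S.orthogonalProjection
            (f (i + 1) (τ (i + 1)) + Real.sqrt (β (i + 1)) • ε (i + 1)) : H))
        + Real.sqrt (β i) •
          (f (i + 1) (τ (i + 1)) + Real.sqrt (β (i + 1)) • ε (i + 1))) :
    τ 0 ∈ S := by
  have h := hrec 0 hL
  rw [hβ0] at h
  simp only [Real.sqrt_zero, zero_smul, add_zero, sub_zero, Real.sqrt_one, one_smul] at h
  rw [h]
  exact (S.orthogonalProjection _).2
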